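/- arXiv:1401.2499 — 6 statements merged into one kernel-verified Lean document; each statement's English description precedes it below -/
import Mathlib

section
/- For every integer n ≥ 3, the (2,2) broadcast domination number of the 3×n grid graph satisfies γ_{2,2}(G_{3,n}) = ⌈4n/3⌉. -/
/-!
For `t = r = 2` a broadcast dominating set is a 2-dominating set: every vertex outside `S` has two
neighbours in `S`.

Lower bound, by discharging over the columns of `G_{3,n}`: a column starts with charge three times
the number of its vertices in `S`; a full column sends `2` to each adjacent empty column, and a
column with at least two vertices sends `1` to each adjacent column with exactly one. In a
2-dominating set the neighbours of an empty column are full, and a column with one vertex has a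
neighbour with at least two, so every column ends with charge at least `4`: `4 n ≤ 3 |S|`.

Upper bound: take the middle row, except that in columns `2, 5, 8, …` (and in column `n` when
`n ≡ 1 [MOD 3]`) the top and bottom cells are taken instead. This set has `⌈4n/3⌉` vertices.
-/

open Classical in
/-- The reception strength at vertex `u` from a set `S` of broadcasting vertices of
transmission strength `t`: the sum of `t - d(u,v)` over all `v ∈ S` with `d(u,v) < t`. -/
noncomputable def reception {V : Type*} (G : SimpleGraph V) (t : ℕ) (S : Finset V) (u : V) : ℕ∞ :=
  ∑ v ∈ S.filter (fun v => G.edist u v < (t : ℕ∞)), ((t : ℕ∞) - G.edist u v)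

/-- `S` is a `(t,r)` broadcast dominating set of `G`. -/
def IsBroadcastDominating {V : Type*} (G : SimpleGraph V) (t r : ℕ) (S : Finset V) : Prop :=
  ∀ u, (r : ℕ∞) ≤ reception G t S u

/-- The `(t,r)` broadcast domination number of a finite graph `G`. -/
noncomputable def broadcastDomNum {V : Type*} [Fintype V] (G : SimpleGraph V) (t r : ℕ) : ℕ :=
  sInf {k | ∃ S : Finset V, IsBroadcastDominating G t r S ∧ S.card = k}

/-- The `m × n` grid graph: vertices are pairs, adjacent iff at ℓ1-distance 1. -/
def gridGraph (m n : ℕ) : SimpleGraph (Fin m × Fin n) where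
  Adj p q := Nat.dist p.1.val q.1.val + Nat.dist p.2.val q.2.val = 1
  symm := by
    constructor
    intro p q h
    show Nat.dist q.1.val p.1.val + Nat.dist q.2.val p.2.val = 1
    rw [Nat.dist_comm q.1.val p.1.val, Nat.dist_comm q.2.val p.2.val]
    exact h
  loopless := by
    constructor
    intro p h
    simp only [Nat.dist_self, Nat.add_zero] at h
    exact absurd h (by norm_num)

open Finset

section TwoDomination

variable {V : Type*} [DecidableEq V] (G : SimpleGraph V) [DecidableRel G.Adj]

theorem reception_two_eq (S : Finset V) (u : V) :
    reception G 2 S u = (if u ∈ S then 2 else 0) + #{v ∈ S | G.Adj u v} := by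
  have hterm : ∀ v ∈ S, (if G.edist u v < ((2 : ℕ) : ℕ∞) then ((2 : ℕ) : ℕ∞) - G.edist u v else 0)
      = (if u = v then 2 else 0) + (if G.Adj u v then 1 else 0) := by
    intro v _
    by_cases huv : u = v
    · subst huv; simp
    by_cases hadj : G.Adj u v
    · rw [SimpleGraph.edist_eq_one_iff_adj.mpr hadj]; simp [huv, hadj]; rfl
    · have h2 : ¬ G.edist u v < 2 := by
        rw [ENat.lt_two_iff, Order.le_one_iff, SimpleGraph.edist_eq_zero_iff,
          SimpleGraph.edist_eq_one_iff_adj]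
        tauto
      simp [huv, hadj, h2]
  rw [reception, sum_filter, sum_congr rfl hterm, sum_add_distrib, sum_ite_eq, sum_boole]

theorem isBroadcastDominating_two_two_iff (S : Finset V) :
    IsBroadcastDominating G 2 2 S ↔ ∀ u, u ∈ S ∨ 2 ≤ #{v ∈ S | G.Adj u v} := by
  refine forall_congr' fun u => ?_
  rw [reception_two_eq]
  by_cases hu : u ∈ S <;> simp [hu]

end TwoDomination

namespace Discharging

/-- The charge a column with `a` vertices of the set sends to an adjacent column with `b`. -/
def flow (a b : ℕ) : ℤ :=
  if a = 3 ∧ b = 0 then 2 else if 2 ≤ a ∧ b = 1 then 1 else 0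

theorem flow_nonneg (a b : ℕ) : 0 ≤ flow a b := by
  unfold flow; split_ifs <;> omega

theorem flow_zero_left (b : ℕ) : flow 0 b = 0 := by
  simp [flow]

theorem four_le_charge {a b c : ℕ} (hempty : b = 0 → a = 3 ∧ c = 3)
    (hsingle : b = 1 → 2 ≤ a ∨ 2 ≤ c) :
    4 ≤ 3 * (b : ℤ) + (flow a b - flow b a) - (flow b c - flow c b) := by
  unfold flow; split_ifs <;> omega

theorem four_mul_le_three_mul_sum (s : ℕ → ℕ) (n : ℕ) (hs₀ : s 0 = 0) (hsn : s (n + 1) = 0)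
    (hempty : ∀ j, 1 ≤ j → j ≤ n → s j = 0 → s (j - 1) = 3 ∧ s (j + 1) = 3)
    (hsingle : ∀ j, 1 ≤ j → j ≤ n → s j = 1 → 2 ≤ s (j - 1) ∨ 2 ≤ s (j + 1)) :
    4 * n ≤ 3 * ∑ j ∈ Icc 1 n, s j := by
  rcases Nat.eq_zero_or_pos n with rfl | hn
  · simp
  set inflow : ℕ → ℤ := fun j => flow (s (j - 1)) (s j) - flow (s j) (s (j - 1))
  have hcharge : ∀ j ∈ Icc 1 n, 4 ≤ 3 * (s j : ℤ) + inflow j - inflow (j + 1) := by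
    intro j hj
    rw [mem_Icc] at hj
    exact four_le_charge (hempty j hj.1 hj.2) (hsingle j hj.1 hj.2)
  have htotal : ∑ j ∈ Icc 1 n, (3 * (s j : ℤ) + inflow j - inflow (j + 1))
      = 3 * ∑ j ∈ Icc 1 n, (s j : ℤ) + inflow 1 - inflow (n + 1) := by
    have htele := sum_Icc_sub (M := ℤ) hn inflow
    rw [sum_sub_distrib] at htele
    rw [sum_sub_distrib, sum_add_distrib, ← mul_sum]
    linarith
  have hleft : inflow 1 ≤ 0 := by
    simp only [inflow, Nat.sub_self, hs₀, flow_zero_left]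
    linarith [flow_nonneg (s 1) 0]
  have hright : 0 ≤ inflow (n + 1) := by
    simp only [inflow, Nat.add_sub_cancel, hsn, flow_zero_left]
    linarith [flow_nonneg (s n) 0]
  have hsum := sum_le_sum hcharge
  rw [htotal, sum_const, Nat.card_Icc, nsmul_eq_mul] at hsum
  zify
  push_cast at hsum
  linarith

end Discharging

instance (m n : ℕ) : DecidableRel (gridGraph m n).Adj :=
  fun _ _ => inferInstanceAs (Decidable (_ = 1))

namespace GridTwoDomination

section Grid

variable {m n : ℕ} (S : Finset (Fin m × Fin n))

/-- Rows and columns are numbered from `1` here, so that rows `0`, `m + 1` and columns `0`, `n + 1`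
read as empty padding. -/
def occ (i j : ℕ) : ℕ := #{v ∈ S | v.1.val + 1 = i ∧ v.2.val + 1 = j}

theorem occ_le_one (i j : ℕ) : occ S i j ≤ 1 :=
  card_le_one.mpr fun a ha b hb => by
    simp only [mem_filter] at ha hb
    exact Prod.ext (Fin.ext (by omega)) (Fin.ext (by omega))

theorem occ_eq_zero {i j : ℕ} (h : i = 0 ∨ m < i ∨ j = 0 ∨ n < j) : occ S i j = 0 :=
  card_eq_zero.mpr <| filter_eq_empty_iff.mpr fun v _ => by
    have := v.1.isLt; have := v.2.isLt; omega

theorem occ_succ_succ (u : Fin m × Fin n) :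
    occ S (u.1.val + 1) (u.2.val + 1) = if u ∈ S then 1 else 0 := by
  have : {v ∈ S | v.1.val + 1 = u.1.val + 1 ∧ v.2.val + 1 = u.2.val + 1} = {v ∈ S | v = u} :=
    filter_congr fun v _ => by simp [Prod.ext_iff, Fin.ext_iff]
  rw [occ, this, filter_eq' S u]
  split_ifs <;> simp

theorem card_filter_adj (u : Fin m × Fin n) :
    #{v ∈ S | (gridGraph m n).Adj u v}
      = occ S u.1.val (u.2.val + 1) + occ S (u.1.val + 2) (u.2.val + 1)
        + occ S (u.1.val + 1) u.2.val + occ S (u.1.val + 1) (u.2.val + 2) := by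
  simp only [occ, card_filter, ← sum_add_distrib]
  refine sum_congr rfl fun v _ => ?_
  have hadj : (gridGraph m n).Adj u v ↔
      Nat.dist u.1.val v.1.val + Nat.dist u.2.val v.2.val = 1 := Iff.rfl
  simp only [hadj, Nat.dist]
  split_ifs <;> omega

theorem card_eq_sum_occ : #S = ∑ j ∈ Icc 1 n, ∑ i ∈ Icc 1 m, occ S i j := by
  rw [card_eq_sum_card_fiberwise (f := fun v => v.2.val + 1) (t := Icc 1 n)
    fun v _ => by simp [v.2.isLt]]
  refine sum_congr rfl fun j _ => ?_
  rw [card_eq_sum_card_fiberwise (f := fun v => v.1.val + 1) (t := Icc 1 m)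
    fun v _ => by simp [v.1.isLt]]
  simp only [occ, filter_filter, and_comm]

def TwoDominated (i j : ℕ) : Prop :=
  occ S i j = 1 ∨ 2 ≤ occ S (i - 1) j + occ S (i + 1) j + occ S i (j - 1) + occ S i (j + 1)

theorem mem_or_two_le_card_filter_adj_iff (u : Fin m × Fin n) :
    u ∈ S ∨ 2 ≤ #{v ∈ S | (gridGraph m n).Adj u v} ↔
      TwoDominated S (u.1.val + 1) (u.2.val + 1) := by
  have hmem : u ∈ S ↔ occ S (u.1.val + 1) (u.2.val + 1) = 1 := by
    rw [occ_succ_succ]; split_ifs <;> simp [*]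
  rw [hmem, card_filter_adj, TwoDominated]
  simp only [Nat.add_sub_cancel, add_assoc, Nat.reduceAdd]

theorem isBroadcastDominating_two_two_iff_twoDominated :
    IsBroadcastDominating (gridGraph m n) 2 2 S ↔
      ∀ i j, 1 ≤ i → i ≤ m → 1 ≤ j → j ≤ n → TwoDominated S i j := by
  simp only [isBroadcastDominating_two_two_iff, mem_or_two_le_card_filter_adj_iff]
  constructor
  · intro h i j hi1 hi hj1 hj
    simpa [Nat.sub_add_cancel hi1, Nat.sub_add_cancel hj1] using
      h (⟨i - 1, by omega⟩, ⟨j - 1, by omega⟩)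
  · exact fun h u => h _ _ le_add_self u.1.isLt le_add_self u.2.isLt

end Grid

section LowerBound

variable {n : ℕ} (S : Finset (Fin 3 × Fin n))

def colCount (j : ℕ) : ℕ := occ S 1 j + occ S 2 j + occ S 3 j

theorem card_eq_sum_colCount : #S = ∑ j ∈ Icc 1 n, colCount S j := by
  rw [card_eq_sum_occ]
  refine sum_congr rfl fun j _ => ?_
  rw [show Icc 1 3 = {1, 2, 3} by rfl, sum_insert (by decide), sum_pair (by decide), colCount,
    add_assoc]

theorem colCount_eq_zero {j : ℕ} (h : j = 0 ∨ n < j) : colCount S j = 0 := by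
  simp only [colCount, occ_eq_zero S (i := 1) (j := j) (by omega),
    occ_eq_zero S (i := 2) (j := j) (by omega), occ_eq_zero S (i := 3) (j := j) (by omega)]

section Dominated

variable {S} (hS : ∀ i j, 1 ≤ i → i ≤ 3 → 1 ≤ j → j ≤ n → TwoDominated S i j)
include hS

theorem twoDominated_top {j : ℕ} (hj1 : 1 ≤ j) (hjn : j ≤ n) :
    occ S 1 j = 1 ∨ 2 ≤ occ S 2 j + occ S 1 (j - 1) + occ S 1 (j + 1) := by
  simpa [TwoDominated, occ_eq_zero S (i := 0) (j := j) (by omega), add_comm (occ S 2 j)]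
    using hS 1 j le_rfl (by omega) hj1 hjn

theorem twoDominated_middle {j : ℕ} (hj1 : 1 ≤ j) (hjn : j ≤ n) :
    occ S 2 j = 1 ∨ 2 ≤ occ S 1 j + occ S 3 j + occ S 2 (j - 1) + occ S 2 (j + 1) :=
  hS 2 j (by omega) (by omega) hj1 hjn

theorem twoDominated_bottom {j : ℕ} (hj1 : 1 ≤ j) (hjn : j ≤ n) :
    occ S 3 j = 1 ∨ 2 ≤ occ S 2 j + occ S 3 (j - 1) + occ S 3 (j + 1) := by
  simpa [TwoDominated, occ_eq_zero S (i := 4) (j := j) (by omega)]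
    using hS 3 j (by omega) le_rfl hj1 hjn

theorem colCount_neighbours_eq_three {j : ℕ} (hj1 : 1 ≤ j) (hjn : j ≤ n) (h : colCount S j = 0) :
    colCount S (j - 1) = 3 ∧ colCount S (j + 1) = 3 := by
  have := twoDominated_top hS hj1 hjn
  have := twoDominated_middle hS hj1 hjn
  have := twoDominated_bottom hS hj1 hjn
  have := occ_le_one S 1 (j - 1); have := occ_le_one S 2 (j - 1); have := occ_le_one S 3 (j - 1)
  have := occ_le_one S 1 (j + 1); have := occ_le_one S 2 (j + 1); have := occ_le_one S 3 (j + 1)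
  unfold colCount at *
  omega

theorem two_le_colCount_neighbour {j : ℕ} (hj1 : 1 ≤ j) (hjn : j ≤ n) (h : colCount S j = 1) :
    2 ≤ colCount S (j - 1) ∨ 2 ≤ colCount S (j + 1) := by
  have := twoDominated_top hS hj1 hjn
  have := twoDominated_middle hS hj1 hjn
  have := twoDominated_bottom hS hj1 hjn
  -- a neighbouring column holding only the cell next to `(1, j)` or `(3, j)` leaves its
  -- opposite outer cell dominated at most once
  have hleft : colCount S (j - 1) = 0 ∨
      (occ S 1 (j - 1) = 1 ∨ 2 ≤ occ S 2 (j - 1) + occ S 1 (j - 1 - 1) + occ S 1 j) ∧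
      (occ S 3 (j - 1) = 1 ∨ 2 ≤ occ S 2 (j - 1) + occ S 3 (j - 1 - 1) + occ S 3 j) := by
    rcases Nat.lt_or_ge (j - 1) 1 with hj | hj
    · exact .inl (colCount_eq_zero S (by omega))
    · have ht := twoDominated_top hS hj (by omega)
      have hb := twoDominated_bottom hS hj (by omega)
      rw [Nat.sub_add_cancel hj1] at ht hb
      exact .inr ⟨ht, hb⟩
  have hright : colCount S (j + 1) = 0 ∨
      (occ S 1 (j + 1) = 1 ∨ 2 ≤ occ S 2 (j + 1) + occ S 1 j + occ S 1 (j + 1 + 1)) ∧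
      (occ S 3 (j + 1) = 1 ∨ 2 ≤ occ S 2 (j + 1) + occ S 3 j + occ S 3 (j + 1 + 1)) := by
    rcases Nat.lt_or_ge n (j + 1) with hj | hj
    · exact .inl (colCount_eq_zero S (by omega))
    · have ht := twoDominated_top hS (j := j + 1) (by omega) hj
      have hb := twoDominated_bottom hS (j := j + 1) (by omega) hj
      rw [Nat.add_sub_cancel] at ht hb
      exact .inr ⟨ht, hb⟩
  have := occ_le_one S 1 j; have := occ_le_one S 2 j; have := occ_le_one S 3 j
  have := occ_le_one S 1 (j - 1); have := occ_le_one S 2 (j - 1); have := occ_le_one S 3 (j - 1)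
  have := occ_le_one S 1 (j + 1); have := occ_le_one S 2 (j + 1); have := occ_le_one S 3 (j + 1)
  have := occ_le_one S 1 (j - 1 - 1); have := occ_le_one S 3 (j - 1 - 1)
  have := occ_le_one S 1 (j + 1 + 1); have := occ_le_one S 3 (j + 1 + 1)
  unfold colCount at *
  omega

end Dominated

theorem four_mul_le_three_mul_card {S : Finset (Fin 3 × Fin n)}
    (hS : IsBroadcastDominating (gridGraph 3 n) 2 2 S) : 4 * n ≤ 3 * #S := by
  rw [isBroadcastDominating_two_two_iff_twoDominated] at hS
  rw [card_eq_sum_colCount]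
  exact Discharging.four_mul_le_three_mul_sum (colCount S) n
    (colCount_eq_zero S (.inl rfl)) (colCount_eq_zero S (.inr n.lt_succ_self))
    (fun _ hj1 hjn => colCount_neighbours_eq_three hS hj1 hjn)
    (fun _ hj1 hjn => two_le_colCount_neighbour hS hj1 hjn)

end LowerBound

section UpperBound

variable {n : ℕ}

/-- The columns where `stripeSet` takes the top and bottom cell instead of the middle one; every
other column is adjacent to one of them. -/
def IsOuterColumn (n j : ℕ) : Prop := j % 3 = 2 ∨ (j = n ∧ n % 3 = 1)

instance (n : ℕ) : DecidablePred (IsOuterColumn n) := fun _ => inferInstanceAs (Decidable (_ ∨ _))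

def stripeSet (n : ℕ) : Finset (Fin 3 × Fin n) :=
  {v | IsOuterColumn n (v.2.val + 1) ↔ v.1.val ≠ 1}

theorem occ_stripeSet (i j : ℕ) :
    occ (stripeSet n) i j
      = if 1 ≤ i ∧ i ≤ 3 ∧ 1 ≤ j ∧ j ≤ n ∧ (IsOuterColumn n j ↔ i ≠ 2) then 1 else 0 := by
  by_cases hij : 1 ≤ i ∧ i ≤ 3 ∧ 1 ≤ j ∧ j ≤ n
  · obtain ⟨i, rfl⟩ := Nat.exists_eq_add_of_le' hij.1
    obtain ⟨j, rfl⟩ := Nat.exists_eq_add_of_le' hij.2.2.1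
    rw [show occ (stripeSet n) (i + 1) (j + 1) = _ from
      occ_succ_succ (stripeSet n) (⟨i, by omega⟩, ⟨j, by omega⟩)]
    simp [stripeSet, hij]
  · rw [occ_eq_zero _ (by omega), if_neg (by tauto)]

theorem exists_adjacent_isOuterColumn {j : ℕ} (hj1 : 1 ≤ j) (hjn : j ≤ n) (h : ¬ IsOuterColumn n j) :
    ∃ j', (j' = j - 1 ∨ j' = j + 1) ∧ 1 ≤ j' ∧ j' ≤ n ∧ IsOuterColumn n j' := by
  unfold IsOuterColumn at *
  by_cases hj : j % 3 = 0
  · exact ⟨j - 1, by omega⟩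
  · exact ⟨j + 1, by omega⟩

theorem twoDominated_stripeSet {i j : ℕ} (hi1 : 1 ≤ i) (hi3 : i ≤ 3) (hj1 : 1 ≤ j) (hjn : j ≤ n) :
    TwoDominated (stripeSet n) i j := by
  have hocc : ∀ {i' j'}, 1 ≤ i' → i' ≤ 3 → 1 ≤ j' → j' ≤ n → (IsOuterColumn n j' ↔ i' ≠ 2) →
      occ (stripeSet n) i' j' = 1 := fun h1 h2 h3 h4 h5 => by
    rw [occ_stripeSet, if_pos ⟨h1, h2, h3, h4, h5⟩]
  by_cases hcell : IsOuterColumn n j ↔ i ≠ 2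
  · exact .inl (hocc hi1 hi3 hj1 hjn hcell)
  right
  by_cases houter : IsOuterColumn n j
  · obtain rfl : i = 2 := by tauto
    have := hocc (i' := 1) le_rfl (by omega) hj1 hjn (by simp [houter])
    have := hocc (i' := 3) (by omega) le_rfl hj1 hjn (by simp [houter])
    simp only [Nat.reduceSub, Nat.reduceAdd]
    omega
  · obtain ⟨j', hj', hj'1, hj'n, houter'⟩ := exists_adjacent_isOuterColumn hj1 hjn houter
    have hi2 : i ≠ 2 := by tauto
    have hside := hocc hi1 hi3 hj'1 hj'n (iff_of_true houter' hi2)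
    have hmid := hocc (i' := 2) le_add_self (by omega) hj1 hjn (iff_of_false houter (by simp))
    obtain rfl | rfl : i = 1 ∨ i = 3 := by omega
    all_goals rcases hj' with rfl | rfl <;> simp only [Nat.reduceSub, Nat.reduceAdd] <;> omega

theorem isBroadcastDominating_stripeSet :
    IsBroadcastDominating (gridGraph 3 n) 2 2 (stripeSet n) :=
  (isBroadcastDominating_two_two_iff_twoDominated _).mpr fun _ _ hi1 hi3 hj1 hjn =>
    twoDominated_stripeSet hi1 hi3 hj1 hjn

theorem colCount_stripeSet {j : ℕ} (hj1 : 1 ≤ j) (hjn : j ≤ n) :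
    colCount (stripeSet n) j = 1 + if IsOuterColumn n j then 1 else 0 := by
  by_cases h : IsOuterColumn n j <;> simp [colCount, occ_stripeSet, h, hj1, hjn]

theorem card_filter_mod_three_eq_two (k : ℕ) : #{j ∈ Icc 1 k | j % 3 = 2} = (k + 1) / 3 := by
  induction k with
  | zero => rfl
  | succ k ih =>
    rw [← insert_Icc_right_eq_Icc_add_one (by omega), filter_insert]
    split_ifs
    · rw [card_insert_of_notMem (by simp), ih]; omega
    · omega

theorem card_filter_isOuterColumn :
    #{j ∈ Icc 1 n | IsOuterColumn n j} = (n + 1) / 3 + if n % 3 = 1 then 1 else 0 := by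
  split_ifs with hn
  · have : {j ∈ Icc 1 n | IsOuterColumn n j} = insert n {j ∈ Icc 1 n | j % 3 = 2} := by
      ext j; simp only [mem_filter, mem_Icc, mem_insert]; unfold IsOuterColumn; omega
    rw [this, card_insert_of_notMem (by simp [hn]), card_filter_mod_three_eq_two]
  · rw [filter_congr (q := (· % 3 = 2)) fun j _ => by unfold IsOuterColumn; omega,
      card_filter_mod_three_eq_two, add_zero]

theorem card_stripeSet : #(stripeSet n) = (4 * n + 2) / 3 := by
  rw [card_eq_sum_colCount, sum_congr rfl fun j hj => colCount_stripeSet (mem_Icc.mp hj).1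
    (mem_Icc.mp hj).2, sum_add_distrib, sum_boole, card_filter_isOuterColumn]
  simp only [sum_const, Nat.card_Icc, smul_eq_mul, mul_one, Nat.cast_id]
  split_ifs <;> omega

end UpperBound

end GridTwoDomination

theorem stmt0_general (n : ℕ) :
    (broadcastDomNum (gridGraph 3 n) 2 2 : ℤ) = ⌈(4 * (n : ℚ)) / 3⌉ := by
  have hγ : broadcastDomNum (gridGraph 3 n) 2 2 = (4 * n + 2) / 3 := by
    refine IsLeast.csInf_eq ⟨⟨GridTwoDomination.stripeSet n,
      GridTwoDomination.isBroadcastDominating_stripeSet, GridTwoDomination.card_stripeSet⟩, ?_⟩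
    rintro _ ⟨S, hS, rfl⟩
    have := GridTwoDomination.four_mul_le_three_mul_card hS
    omega
  rw [hγ, show 4 * (n : ℚ) = ((4 * n : ℕ) : ℚ) by push_cast; rfl,
    show (3 : ℚ) = ((3 : ℕ) : ℚ) by rfl, Rat.ceil_natCast_div_natCast]
  omega

theorem stmt0 (n : ℕ) (hn : 3 ≤ n) :
    (broadcastDomNum (gridGraph 3 n) 2 2 : ℤ) = ⌈(4 * (n : ℚ)) / 3⌉ :=
  stmt0_general n
end

section
/- For every integer n ≥ 3, the (3,1) broadcast domination number of the 3×n grid graph satisfies γ_{3,1}(G_{3,n}) = ⌈n/3⌉. -/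
/-! The grid `G_{m,n}` is the box product of two paths, so its graph distance is the ℓ1-distance,
and a set is `(3,1)` broadcast dominating exactly when every vertex lies within ℓ1-distance `2` of
it. A broadcaster reaches at most `6` of the `2n` vertices in the two outer rows of `G_{3,n}`, so
at least `⌈n/3⌉` broadcasters are needed; one in the middle row for every block of three
columns suffices. -/

open SimpleGraph Finset

theorem one_le_reception_iff {V : Type*} (G : SimpleGraph V) (t : ℕ) (S : Finset V) (u : V) :
    1 ≤ reception G t S u ↔ ∃ v ∈ S, G.edist u v < t := by
  rw [Order.one_le_iff_ne_zero, reception, Ne, sum_eq_zero_iff]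
  simp only [mem_filter, tsub_eq_zero_iff_le, not_forall, not_le, exists_prop, and_assoc,
    and_self]

theorem isBroadcastDominating_one_iff {V : Type*} (G : SimpleGraph V) (t : ℕ) (S : Finset V) :
    IsBroadcastDominating G t 1 S ↔ ∀ u, ∃ v ∈ S, G.edist u v < t := by
  simp only [IsBroadcastDominating, Nat.cast_one, one_le_reception_iff]

theorem broadcastDomNum_eq_of_forall_le {V : Type*} [Fintype V] {G : SimpleGraph V} {t r k : ℕ}
    (S : Finset V) (hS : IsBroadcastDominating G t r S) (hk : S.card = k)
    (h : ∀ S : Finset V, IsBroadcastDominating G t r S → k ≤ S.card) :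
    broadcastDomNum G t r = k :=
  le_antisymm (Nat.sInf_le ⟨S, hS, hk⟩)
    (le_csInf ⟨k, S, hS, hk⟩ fun _ ⟨S', hS', h'⟩ => h' ▸ h S' hS')

theorem SimpleGraph.Walk.dist_le_length_of_pathGraph {n : ℕ} {u v : Fin n}
    (w : (pathGraph n).Walk u v) : Nat.dist u v ≤ w.length := by
  induction w with
  | nil => simp
  | cons h _ ih =>
    rw [pathGraph_adj] at h
    simp only [Walk.length_cons, Nat.dist] at ih ⊢
    omega

theorem edist_pathGraph_le_of_val_eq_add {n : ℕ} (k : ℕ) :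
    ∀ u v : Fin n, v.val = u.val + k → (pathGraph n).edist u v ≤ k := by
  induction k with
  | zero => intro u v h; simp [Fin.ext (by omega : u.val = v.val)]
  | succ k ih =>
    intro u v h
    let w : Fin n := ⟨u.val + k, by omega⟩
    have hwv : (pathGraph n).Adj w v := pathGraph_adj.mpr (.inl (by simp only [w]; omega))
    calc (pathGraph n).edist u v ≤ (pathGraph n).edist u w + (pathGraph n).edist w v :=
          SimpleGraph.edist_triangle
      _ ≤ k + 1 := add_le_add (ih u w rfl) (edist_eq_one_iff_adj.mpr hwv).le
      _ = (k + 1 : ℕ) := by push_cast; rfl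

theorem edist_pathGraph {n : ℕ} (u v : Fin n) : (pathGraph n).edist u v = Nat.dist u v := by
  refine le_antisymm ?_ (le_sInf ?_)
  · rcases le_total u v with h | h
    · exact edist_pathGraph_le_of_val_eq_add _ u v (by rw [Nat.dist]; omega)
    · rw [edist_comm, Nat.dist_comm]
      exact edist_pathGraph_le_of_val_eq_add _ v u (by rw [Nat.dist]; omega)
  · rintro _ ⟨w, rfl⟩
    exact Nat.cast_le.mpr w.dist_le_length_of_pathGraph

theorem gridGraph_eq_boxProd (m n : ℕ) : gridGraph m n = pathGraph m □ pathGraph n := by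
  ext p q
  simp only [gridGraph, boxProd_adj, pathGraph_adj, Nat.dist, Fin.ext_iff]
  omega

def gridDist {m n : ℕ} (p q : Fin m × Fin n) : ℕ := Nat.dist p.1 q.1 + Nat.dist p.2 q.2

theorem edist_gridGraph {m n : ℕ} (p q : Fin m × Fin n) :
    (gridGraph m n).edist p q = gridDist p q := by
  rw [gridGraph_eq_boxProd, edist_boxProd, edist_pathGraph, edist_pathGraph, gridDist]
  push_cast; rfl

theorem isBroadcastDominating_gridGraph_one_iff {m n t : ℕ} (S : Finset (Fin m × Fin n)) :
    IsBroadcastDominating (gridGraph m n) t 1 S ↔ ∀ u, ∃ v ∈ S, gridDist u v < t := by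
  simp only [isBroadcastDominating_one_iff, edist_gridGraph, Nat.cast_lt]

def middleRowBroadcasters (n : ℕ) : Finset (Fin 3 × Fin n) :=
  univ.image fun i : Fin ((n + 2) / 3) => (1, ⟨min (3 * i + 1) (n - 1), by omega⟩)

theorem card_middleRowBroadcasters (n : ℕ) : (middleRowBroadcasters n).card = (n + 2) / 3 := by
  rw [middleRowBroadcasters, card_image_of_injective, card_univ, Fintype.card_fin]
  intro i j hij
  simp only [Prod.mk.injEq, Fin.mk.injEq, true_and] at hij
  omega

theorem isBroadcastDominating_middleRowBroadcasters (n : ℕ) :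
    IsBroadcastDominating (gridGraph 3 n) 3 1 (middleRowBroadcasters n) := by
  rw [isBroadcastDominating_gridGraph_one_iff]
  intro u
  refine ⟨_, mem_image_of_mem _ (mem_univ ⟨u.2 / 3, by omega⟩), ?_⟩
  simp only [gridDist, Nat.dist]
  omega

def outerRows (n : ℕ) : Finset (Fin 3 × Fin n) := {0, 2} ×ˢ univ

theorem mem_outerRows {n : ℕ} {u : Fin 3 × Fin n} :
    u ∈ outerRows n ↔ u.1.val = 0 ∨ u.1.val = 2 := by
  rw [outerRows, mem_product, mem_insert, mem_singleton]
  simp only [mem_univ, and_true, Fin.ext_iff, Fin.val_zero, Fin.val_two]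

theorem card_outerRows_filter_gridDist_le_two {n : ℕ} (s : Fin 3 × Fin n) :
    ((outerRows n).filter (gridDist · s ≤ 2)).card ≤ 6 := by
  -- Row 0 meets the ball in columns `s.2 ± (2 - s.1)`, row 2 in columns `s.2 ± s.1`; the map
  -- below lists these `6` cells consecutively.
  calc _ ≤ (range 6).card := card_le_card_of_injOn
          (fun u => u.2 + 3 * (u.1 / 2) + 2 - (s.1 + s.2)) ?_ ?_
    _ = 6 := card_range 6
  · intro u hu
    rw [mem_coe, mem_filter, mem_outerRows, gridDist, Nat.dist, Nat.dist] at hu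
    rw [coe_range, Set.mem_Iio]
    dsimp only
    omega
  · intro u hu v hv huv
    rw [mem_coe, mem_filter, mem_outerRows, gridDist, Nat.dist, Nat.dist] at hu hv
    dsimp only at huv
    exact Prod.ext (Fin.ext (by omega)) (Fin.ext (by omega))

theorem le_card_of_isBroadcastDominating {n : ℕ} {S : Finset (Fin 3 × Fin n)}
    (hS : IsBroadcastDominating (gridGraph 3 n) 3 1 S) : (n + 2) / 3 ≤ S.card := by
  rw [isBroadcastDominating_gridGraph_one_iff] at hS
  have hcover : outerRows n ⊆ S.biUnion fun s => (outerRows n).filter (gridDist · s ≤ 2) := by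
    intro u hu
    obtain ⟨s, hs, hus⟩ := hS u
    exact mem_biUnion.mpr ⟨s, hs, mem_filter.mpr ⟨hu, by omega⟩⟩
  have hcount : 2 * n ≤ 6 * S.card := calc
    2 * n = (outerRows n).card := by simp [outerRows]
    _ ≤ ∑ s ∈ S, ((outerRows n).filter (gridDist · s ≤ 2)).card :=
      (card_le_card hcover).trans card_biUnion_le
    _ ≤ ∑ _s ∈ S, 6 := sum_le_sum fun s _ => card_outerRows_filter_gridDist_le_two s
    _ = 6 * S.card := by rw [sum_const, smul_eq_mul, mul_comm]
  omega

theorem natCast_add_two_div_three_eq_ceil (n : ℕ) :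
    (((n + 2) / 3 : ℕ) : ℤ) = ⌈(n : ℚ) / 3⌉ := by
  rw [show (3 : ℚ) = ((3 : ℕ) : ℚ) by norm_num, Rat.ceil_natCast_div_natCast]
  omega

theorem stmt3_general (n : ℕ) :
    (broadcastDomNum (gridGraph 3 n) 3 1 : ℤ) = ⌈(n : ℚ) / 3⌉ := by
  rw [broadcastDomNum_eq_of_forall_le (middleRowBroadcasters n)
    (isBroadcastDominating_middleRowBroadcasters n) (card_middleRowBroadcasters n)
    fun _ => le_card_of_isBroadcastDominating]
  exact natCast_add_two_div_three_eq_ceil n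

theorem stmt3 (n : ℕ) (hn : 3 ≤ n) :
    (broadcastDomNum (gridGraph 3 n) 3 1 : ℤ) = ⌈(n : ℚ) / 3⌉ :=
  stmt3_general n
end

section
/- Let m, n be positive integers and write m̄ = m mod 13, n̄ = n mod 13. For i ∈ {0,…,12}, let N(m,n,i) be the number of pairs (a,b) of integers with 1 ≤ a ≤ n, 1 ≤ b ≤ m, and 4a + 7b ≡ i (mod 13). Then min over i ∈ {0,…,12} of N(m,n,i) equals ⌊mn/13⌋ − δ, where δ = 1 if (m̄,n̄) belongs to the set Φ = {(2,7),(3,9),(4,4),(4,7),(4,10),(6,7),(6,9),(6,11),(7,2),(7,4),(7,6),(9,3),(9,6),(9,9),(10,4),(11,6)} and δ = 0 otherwise. -/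
/-!
Since 4 and 7 are units modulo 13, every block of 13 consecutive values of `a` (or of `b`)
meets each residue class of `4a + 7b` exactly once. Hence replacing `n` by `n + 13` adds `m`
to every count `N(m, n, i)`, and so to their minimum, and symmetrically in `m`; the right-hand
side `⌊mn/13⌋ - δ` obeys the same two shift laws. Two functions with these shift laws agree
everywhere as soon as they agree for `m, n < 13`, which is a finite computation.
-/

def Phi : List (ℕ × ℕ) :=
  [(2, 7), (3, 9), (4, 4), (4, 7), (4, 10), (6, 7), (6, 9), (6, 11),
   (7, 2), (7, 4), (7, 6), (9, 3), (9, 6), (9, 9), (10, 4), (11, 6)]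

open Finset

theorem Int.card_Ioc_filter_modEq_add_self (k v : ℤ) {q : ℤ} (hq : 0 < q) :
    #{x ∈ Ioc k (k + q) | x ≡ v [ZMOD q]} = 1 := by
  have hshift : ((k : ℚ) + q - v) / q = (k - v) / q + 1 := by
    field_simp
    ring
  rw [← Nat.cast_inj (R := ℤ), Int.Ioc_filter_modEq_card _ _ hq, Int.cast_add, hshift,
    Int.floor_add_one]
  simp

theorem Int.exists_mul_add_emod_eq_iff_modEq {c q : ℤ} (hc : IsCoprime c q) (d : ℤ) {i : ℤ}
    (hi₀ : 0 ≤ i) (hiq : i < q) :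
    ∃ v, ∀ x, (c * x + d) % q = i ↔ x ≡ v [ZMOD q] := by
  obtain ⟨u, w, huw⟩ := hc
  -- `u` inverts `c` modulo `q`
  refine ⟨u * (i - d), fun x => ?_⟩
  rw [Int.modEq_iff_dvd, ← Int.emod_eq_of_lt hi₀ hiq, ← Int.ModEq,
    Int.modEq_iff_dvd, Int.emod_eq_of_lt hi₀ hiq]
  constructor
  · intro h
    have : u * (i - d) - x = u * (i - (c * x + d)) - w * x * q := by
      linear_combination x * huw
    rw [this]
    exact dvd_sub (h.mul_left u) (dvd_mul_left _ _)
  · intro h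
    have : i - (c * x + d) = c * (u * (i - d) - x) + (i - d) * w * q := by
      linear_combination (d - i) * huw
    rw [this]
    exact dvd_add (h.mul_left c) (dvd_mul_left _ _)

theorem Int.card_Ioc_filter_mul_add_emod_eq {c q : ℤ} (hc : IsCoprime c q) (hq : 0 < q)
    (k d : ℤ) {i : ℤ} (hi₀ : 0 ≤ i) (hiq : i < q) :
    #{x ∈ Ioc k (k + q) | (c * x + d) % q = i} = 1 := by
  obtain ⟨v, hv⟩ := Int.exists_mul_add_emod_eq_iff_modEq hc d hi₀ hiq
  simp_rw [hv]
  exact Int.card_Ioc_filter_modEq_add_self k v hq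

theorem Finset.min'_image_add_const {ι β : Type*} [Add β] [LinearOrder β]
    [AddRightMono β] {s : Finset ι} (f : ι → β) (c : β) (hs : s.Nonempty) :
    (s.image fun i => f i + c).min' (hs.image _) = (s.image f).min' (hs.image f) + c := by
  have hcomp : s.image (fun i => f i + c) = (s.image f).image (· + c) := by
    rw [image_image]
    rfl
  simp only [hcomp]
  exact min'_image (fun _ _ h => add_le_add_left h c) _ _

noncomputable def residueCount (q : ℕ) (c₁ c₂ : ℤ) (m n : ℕ) (i : ℤ) : ℕ :=
  #{p ∈ Icc (1 : ℤ) n ×ˢ Icc (1 : ℤ) m | (c₁ * p.1 + c₂ * p.2) % q = i}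

noncomputable def minResidueCount (q : ℕ) [NeZero q] (c₁ c₂ : ℤ) (m n : ℕ) : ℤ :=
  ((range q).image fun i : ℕ => (residueCount q c₁ c₂ m n i : ℤ)).min'
    ((nonempty_range_iff.mpr (NeZero.ne q)).image _)

section

variable (q : ℕ) (c₁ c₂ : ℤ)

theorem residueCount_comm (m n : ℕ) (i : ℤ) :
    residueCount q c₁ c₂ m n i = residueCount q c₂ c₁ n m i := by
  refine card_nbij' Prod.swap Prod.swap ?_ ?_ (fun _ _ => rfl) (fun _ _ => rfl) <;>
  · rintro ⟨a, b⟩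
    simp only [mem_coe, mem_filter, mem_product, Prod.swap, add_comm]
    tauto

theorem residueCount_add_right (hc : IsCoprime c₁ q) (hq : 0 < q) (m n : ℕ) {i : ℤ}
    (hi₀ : 0 ≤ i) (hiq : i < q) :
    residueCount q c₁ c₂ m (n + q) i = residueCount q c₁ c₂ m n i + m := by
  have hsplit : Icc (1 : ℤ) ↑(n + q) = Icc 1 ↑n ∪ Ioc (n : ℤ) (n + q) := by
    ext x
    simp only [mem_union, mem_Icc, mem_Ioc]
    omega
  have hdisj : Disjoint (Icc (1 : ℤ) n) (Ioc (n : ℤ) (n + q)) := by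
    rw [disjoint_left]
    intro x hx hx'
    simp only [mem_Icc, mem_Ioc] at hx hx'
    omega
  have hwindow :
      #{p ∈ Ioc (n : ℤ) (n + q) ×ˢ Icc (1 : ℤ) m | (c₁ * p.1 + c₂ * p.2) % q = i} = m := by
    rw [card_filter, sum_product_right]
    calc _ = ∑ _b ∈ Icc (1 : ℤ) m, 1 := sum_congr rfl fun b _ => by
          rw [← card_filter]
          exact Int.card_Ioc_filter_mul_add_emod_eq hc (by exact_mod_cast hq) n (c₂ * b) hi₀ hiq
      _ = m := by simp
  unfold residueCount
  rw [hsplit, union_product, filter_union, card_union_of_disjoint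
    (disjoint_filter_filter (disjoint_product.2 (Or.inl hdisj))), hwindow]

theorem minResidueCount_add_right [NeZero q] (hc : IsCoprime c₁ q) (m n : ℕ) :
    minResidueCount q c₁ c₂ m (n + q) = minResidueCount q c₁ c₂ m n + m := by
  have hshift : (range q).image (fun i : ℕ => (residueCount q c₁ c₂ m (n + q) i : ℤ)) =
      (range q).image fun i : ℕ => (residueCount q c₁ c₂ m n i : ℤ) + m :=
    image_congr fun i hi => by
      rw [residueCount_add_right q c₁ c₂ hc (Nat.pos_of_neZero q) m n (Nat.cast_nonneg i)
        (by exact_mod_cast mem_range.1 hi), Nat.cast_add]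
  simp only [minResidueCount, hshift]
  exact min'_image_add_const _ _ (nonempty_range_iff.mpr (NeZero.ne q))

theorem minResidueCount_comm [NeZero q] (m n : ℕ) :
    minResidueCount q c₁ c₂ m n = minResidueCount q c₂ c₁ n m := by
  simp only [minResidueCount, residueCount_comm q c₁ c₂ m n]

end

-- Equivalently, `f m n - m * n / q` (over `ℚ`) is `q`-periodic in each variable.
structure IsQuasiPeriodic (q : ℕ) (f : ℕ → ℕ → ℤ) : Prop where
  add_left : ∀ m n, f (m + q) n = f m n + n
  add_right : ∀ m n, f m (n + q) = f m n + m

theorem IsQuasiPeriodic.eq_of_eq_of_lt {q : ℕ} {f g : ℕ → ℕ → ℤ} (hf : IsQuasiPeriodic q f)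
    (hg : IsQuasiPeriodic q g) (hq : 0 < q) (hbase : ∀ m < q, ∀ n < q, f m n = g m n) :
    f = g := by
  funext m n
  have hleft : Function.Periodic (fun m => f m n - g m n) q := fun m => by
    simp only [hf.add_left, hg.add_left]
    ring
  have hright : Function.Periodic (fun n => f (m % q) n - g (m % q) n) q := fun n => by
    simp only [hf.add_right, hg.add_right]
    ring
  have := hleft.map_mod_nat m
  have := hright.map_mod_nat n
  have := hbase (m % q) (Nat.mod_lt _ hq) (n % q) (Nat.mod_lt _ hq)
  linarith

theorem minResidueCount_isQuasiPeriodic {q : ℕ} [NeZero q] {c₁ c₂ : ℤ} (hc₁ : IsCoprime c₁ q)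
    (hc₂ : IsCoprime c₂ q) : IsQuasiPeriodic q (minResidueCount q c₁ c₂) where
  add_left m n := by
    rw [minResidueCount_comm, minResidueCount_add_right q c₂ c₁ hc₂, minResidueCount_comm]
  add_right := minResidueCount_add_right q c₁ c₂ hc₁

def phiCorrectedFloor (m n : ℕ) : ℤ :=
  (m * n / 13 : ℕ) - if (m % 13, n % 13) ∈ Phi then 1 else 0

theorem phiCorrectedFloor_isQuasiPeriodic : IsQuasiPeriodic 13 phiCorrectedFloor where
  add_left m n := by
    rw [phiCorrectedFloor, phiCorrectedFloor, Nat.add_mod_right, add_mul,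
      Nat.add_mul_div_left _ _ (by norm_num)]
    push_cast
    ring
  add_right m n := by
    rw [phiCorrectedFloor, phiCorrectedFloor, Nat.add_mod_right, mul_add, mul_comm m 13,
      Nat.add_mul_div_left _ _ (by norm_num)]
    push_cast
    ring

theorem stmt13 (m n : ℕ) :
    (Finset.min'
        ((Finset.range 13).image (fun i : ℕ =>
          ((Finset.Icc (1 : ℤ) n ×ˢ Finset.Icc (1 : ℤ) m).filter
            (fun p => (4 * p.1 + 7 * p.2) % 13 = (i : ℤ))).card))
        ((Finset.nonempty_range_iff.mpr (by norm_num)).image _) : ℤ) =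
      ⌊((m : ℚ) * (n : ℚ)) / 13⌋ - (if (m % 13, n % 13) ∈ Phi then 1 else 0) := by
  have hfloor : ⌊((m : ℚ) * (n : ℚ)) / 13⌋ = ((m * n / 13 : ℕ) : ℤ) := by
    exact_mod_cast Rat.floor_natCast_div_natCast (m * n) 13
  have hcop4 : IsCoprime (4 : ℤ) ((13 : ℕ) : ℤ) := by decide
  have hcop7 : IsCoprime (7 : ℤ) ((13 : ℕ) : ℤ) := by decide
  have hformula := (minResidueCount_isQuasiPeriodic hcop4 hcop7).eq_of_eq_of_lt
    phiCorrectedFloor_isQuasiPeriodic (by norm_num) (by decide)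
  show minResidueCount 13 4 7 m n = _
  rw [hfloor]
  exact congrFun (congrFun hformula m) n
end

section
/- For each i ∈ {0,1,2}, the set P(i) = {(x,y) ∈ ℤ×ℤ : x + 2y ≡ i (mod 3)} is a (2,2) broadcast dominating set of the infinite grid ℤ×ℤ: for every (a,b) ∈ ℤ×ℤ, the sum of (2 − d((a,b),(x,y))) over all (x,y) ∈ P(i) with d((a,b),(x,y)) < 2 is at least 2, where d denotes ℓ1-distance. -/
theorem stmt14 (i : ZMod 3) (a b : ℤ) :
    (2 : ℤ) ≤
      ∑ p ∈ (Finset.Icc (a - 2) (a + 2) ×ˢ Finset.Icc (b - 2) (b + 2)).filter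
          (fun p : ℤ × ℤ => |a - p.1| + |b - p.2| < 2 ∧ ((p.1 + 2 * p.2 : ℤ) : ZMod 3) = i),
        (2 - (|a - p.1| + |b - p.2|)) := by
  set s := (Finset.Icc (a - 2) (a + 2) ×ˢ Finset.Icc (b - 2) (b + 2)).filter
      (fun p : ℤ × ℤ => |a - p.1| + |b - p.2| < 2 ∧ ((p.1 + 2 * p.2 : ℤ) : ZMod 3) = i) with hs
  have hnn : ∀ p ∈ s, 0 ≤ 2 - (|a - p.1| + |b - p.2|) := by
    intro p hp
    simp only [hs, Finset.mem_filter] at hp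
    linarith [hp.2.1]
  set c : ZMod 3 := ((a + 2 * b : ℤ) : ZMod 3) with hc
  have hcases : ∀ x : ZMod 3, x = 0 ∨ x = 1 ∨ x = 2 := by decide
  have mem_of : ∀ x y : ℤ, |a - x| + |b - y| < 2 → ((x + 2 * y : ℤ) : ZMod 3) = i →
      (x, y) ∈ s := by
    intro x y h1 h2
    simp only [hs, Finset.mem_filter, Finset.mem_product, Finset.mem_Icc]
    refine ⟨⟨⟨?_, ?_⟩, ?_, ?_⟩, h1, h2⟩ <;>
      · rcases abs_lt.mp (lt_of_le_of_lt (le_add_of_nonneg_right (abs_nonneg _)) h1) with ⟨_, _⟩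
        rcases abs_lt.mp (lt_of_le_of_lt (le_add_of_nonneg_left (abs_nonneg _)) h1) with ⟨_, _⟩
        omega
  rcases hcases (i - c) with h | h | h
  · -- i = c, use (a, b)
    have hi : i = c := by linear_combination h
    have hmem : (a, b) ∈ s := mem_of a b (by simp) (by rw [hi, hc])
    calc (2 : ℤ) = ∑ p ∈ ({(a, b)} : Finset (ℤ × ℤ)), (2 - (|a - p.1| + |b - p.2|)) := by simp
    _ ≤ _ := Finset.sum_le_sum_of_subset_of_nonneg (by simpa using hmem)
        (fun p hp _ => hnn p hp)
  · -- i = c + 1, use (a+1, b) and (a, b-1)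
    have hi : i = c + 1 := by linear_combination h
    have hm1 : (a + 1, b) ∈ s := by
      refine mem_of (a + 1) b ?_ ?_
      · have : a - (a + 1) = -1 := by ring
        rw [this]; norm_num
      · rw [hi, hc]; push_cast; ring
    have hm2 : (a, b - 1) ∈ s := by
      refine mem_of a (b - 1) ?_ ?_
      · have : b - (b - 1) = 1 := by ring
        rw [this]; norm_num
      · rw [hi, hc]; push_cast
        have h3 : (3 : ZMod 3) = 0 := by decide
        linear_combination -h3
    have hne : ((a + 1, b) : ℤ × ℤ) ≠ (a, b - 1) := by
      intro hEq
      have := congrArg Prod.fst hEq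
      simp at this
    calc (2 : ℤ) = ∑ p ∈ ({(a + 1, b), (a, b - 1)} : Finset (ℤ × ℤ)),
          (2 - (|a - p.1| + |b - p.2|)) := by
          rw [Finset.sum_pair hne]
          have e1 : a - (a + 1) = -1 := by ring
          have e2 : b - (b - 1) = 1 := by ring
          simp [e1, e2]
    _ ≤ _ := Finset.sum_le_sum_of_subset_of_nonneg
        (by intro p hp; simp only [Finset.mem_insert, Finset.mem_singleton] at hp
            rcases hp with rfl | rfl <;> assumption)
        (fun p hp _ => hnn p hp)
  · -- i = c + 2, use (a-1, b) and (a, b+1)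
    have hi : i = c + 2 := by linear_combination h
    have hm1 : (a - 1, b) ∈ s := by
      refine mem_of (a - 1) b ?_ ?_
      · have : a - (a - 1) = 1 := by ring
        rw [this]; norm_num
      · rw [hi, hc]; push_cast
        have h3 : (3 : ZMod 3) = 0 := by decide
        linear_combination -h3
    have hm2 : (a, b + 1) ∈ s := by
      refine mem_of a (b + 1) ?_ ?_
      · have : b - (b + 1) = -1 := by ring
        rw [this]; norm_num
      · rw [hi, hc]; push_cast; ring
    have hne : ((a - 1, b) : ℤ × ℤ) ≠ (a, b + 1) := by
      intro hEq
      have := congrArg Prod.fst hEq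
      simp at this
    calc (2 : ℤ) = ∑ p ∈ ({(a - 1, b), (a, b + 1)} : Finset (ℤ × ℤ)),
          (2 - (|a - p.1| + |b - p.2|)) := by
          rw [Finset.sum_pair hne]
          have e1 : a - (a - 1) = 1 := by ring
          have e2 : b - (b + 1) = -1 := by ring
          simp [e1, e2]
    _ ≤ _ := Finset.sum_le_sum_of_subset_of_nonneg
        (by intro p hp; simp only [Finset.mem_insert, Finset.mem_singleton] at hp
            rcases hp with rfl | rfl <;> assumption)
        (fun p hp _ => hnn p hp)
end

section
/- For each i ∈ {0,…,12}, the set P(i) = {(x,y) ∈ ℤ×ℤ : 4x + 7y ≡ i (mod 13)} is a perfect distance-2 dominating set of the infinite grid ℤ×ℤ: for every (a,b) ∈ ℤ×ℤ there is exactly one (x,y) ∈ P(i) with |a−x| + |b−y| ≤ 2. -/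
/-!
The form φ(x, y) = 4x + 7y mod 13 has no nonzero kernel vector of ℓ¹-norm at most 4, so two
points of ℤ² within distance 2 of a common centre never have the same value of φ: φ is injective
on every translate of the radius-2 ball. That ball has 2·2² + 2·2 + 1 = 13 points, as many as
ZMod 13, so φ maps each translate bijectively onto ZMod 13.
-/

open Finset

noncomputable def l1Ball (r : ℕ) : Finset (ℤ × ℤ) :=
  (Icc (-r : ℤ) r ×ˢ Icc (-r : ℤ) r).filter fun d => |d.1| + |d.2| ≤ r

theorem mem_l1Ball {r : ℕ} {d : ℤ × ℤ} : d ∈ l1Ball r ↔ |d.1| + |d.2| ≤ r := by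
  simp only [l1Ball, mem_filter, mem_product, mem_Icc, ← abs_le, and_iff_right_iff_imp]
  intro h
  constructor <;> linarith [abs_nonneg d.1, abs_nonneg d.2]

theorem abs_add_abs_sub_le (d e : ℤ × ℤ) :
    |(d - e).1| + |(d - e).2| ≤ (|d.1| + |d.2|) + (|e.1| + |e.2|) := by
  simp only [Prod.fst_sub, Prod.snd_sub]
  linarith [abs_sub d.1 e.1, abs_sub d.2 e.2]

section
variable {G : Type*} [AddGroup G] (φ : ℤ × ℤ →+ G) {r : ℕ}

theorem injOn_l1Ball (hker : ∀ d ∈ l1Ball (2 * r), φ d = 0 → d = 0) :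
    Set.InjOn φ (l1Ball r) := by
  intro d hd e he hde
  rw [mem_coe, mem_l1Ball] at hd he
  have hsub : d - e ∈ l1Ball (2 * r) := by
    rw [mem_l1Ball]
    push_cast
    linarith [abs_add_abs_sub_le d e]
  exact sub_eq_zero.mp (hker _ hsub (by rw [map_sub, hde, sub_self]))

theorem exists_mem_l1Ball_map_eq [Fintype G] (hker : ∀ d ∈ l1Ball (2 * r), φ d = 0 → d = 0)
    (hcard : #(l1Ball r) = Fintype.card G) (g : G) : ∃ d ∈ l1Ball r, φ d = g := by
  classical
  have himage : (l1Ball r).image φ = univ :=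
    eq_univ_of_card _ ((card_image_of_injOn (injOn_l1Ball φ hker)).trans hcard)
  exact mem_image.mp (himage ▸ mem_univ g)

theorem existsUnique_map_eq_of_l1_le [Fintype G]
    (hker : ∀ d ∈ l1Ball (2 * r), φ d = 0 → d = 0)
    (hcard : #(l1Ball r) = Fintype.card G) (g : G) (a : ℤ × ℤ) :
    ∃! p : ℤ × ℤ, φ p = g ∧ |a.1 - p.1| + |a.2 - p.2| ≤ r := by
  obtain ⟨d, hd, hφd⟩ := exists_mem_l1Ball_map_eq φ hker hcard (-φ a + g)
  refine ⟨a + d, ⟨?_, ?_⟩, ?_⟩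
  · rw [map_add, hφd, add_neg_cancel_left]
  · simpa [abs_neg] using mem_l1Ball.mp hd
  · rintro p ⟨hφp, hp⟩
    have hp' : -a + p ∈ l1Ball r := by
      rw [mem_l1Ball]
      simpa [abs_sub_comm, neg_add_eq_sub] using hp
    have := injOn_l1Ball φ hker hp' hd (by rw [map_add, map_neg, hφp, hφd])
    rw [← this, add_neg_cancel_left]

end

def gridForm : ℤ × ℤ →+ ZMod 13 :=
  AddMonoidHom.mk' (fun p => ((4 * p.1 + 7 * p.2 : ℤ) : ZMod 13)) fun p q => by
    simp only [Prod.fst_add, Prod.snd_add]; push_cast; ring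

theorem card_l1Ball_two : #(l1Ball 2) = Fintype.card (ZMod 13) := by decide

theorem gridForm_ker_l1Ball_four : ∀ d ∈ l1Ball (2 * 2), gridForm d = 0 → d = 0 := by decide

theorem stmt15 (i : ZMod 13) (a b : ℤ) :
    ∃! p : ℤ × ℤ, ((4 * p.1 + 7 * p.2 : ℤ) : ZMod 13) = i ∧ |a - p.1| + |b - p.2| ≤ 2 :=
  existsUnique_map_eq_of_l1_le gridForm gridForm_ker_l1Ball_four card_l1Ball_two i (a, b)
end

section
/- For each i ∈ {0,…,7}, the set P(i) = {(x,y) ∈ ℤ×ℤ : x + 3y ≡ i (mod 8)} is a (3,2) broadcast dominating set of the infinite grid ℤ×ℤ: for every (a,b) ∈ ℤ×ℤ, the sum of (3 − d((a,b),(x,y))) over all (x,y) ∈ P(i) with d((a,b),(x,y)) < 3 is at least 2, where d denotes ℓ1-distance. -/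
theorem stmt16 (i : ZMod 8) (a b : ℤ) :
    (2 : ℤ) ≤
      ∑ p ∈ (Finset.Icc (a - 3) (a + 3) ×ˢ Finset.Icc (b - 3) (b + 3)).filter
          (fun p : ℤ × ℤ => |a - p.1| + |b - p.2| < 3 ∧ ((p.1 + 3 * p.2 : ℤ) : ZMod 8) = i),
        (3 - (|a - p.1| + |b - p.2|)) := by
  have key : ∀ j : ZMod 8, (2:ℤ) ≤
      ∑ q ∈ (Finset.Icc (-3:ℤ) 3 ×ˢ Finset.Icc (-3:ℤ) 3).filter
          (fun q : ℤ × ℤ => |q.1| + |q.2| < 3 ∧ ((q.1 + 3 * q.2 : ℤ) : ZMod 8) = j),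
        (3 - (|q.1| + |q.2|)) := by decide
  refine le_trans (key (i - a - 3*b)) (le_of_eq ?_)
  refine Finset.sum_nbij' (fun q => (q.1 + a, q.2 + b)) (fun p => (p.1 - a, p.2 - b))
    ?_ ?_ ?_ ?_ ?_
  · intro q hq
    simp only [Finset.mem_filter, Finset.mem_product, Finset.mem_Icc] at hq ⊢
    obtain ⟨⟨⟨h1,h2⟩,h3,h4⟩,h5,h6⟩ := hq
    have e1 : a - (q.1 + a) = -q.1 := by ring
    have e2 : b - (q.2 + b) = -q.2 := by ring
    rw [e1, e2, abs_neg, abs_neg]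
    refine ⟨⟨⟨by omega, by omega⟩, by omega, by omega⟩, h5, ?_⟩
    push_cast
    push_cast at h6
    linear_combination h6
  · intro p hp
    simp only [Finset.mem_filter, Finset.mem_product, Finset.mem_Icc] at hp ⊢
    obtain ⟨⟨⟨h1,h2⟩,h3,h4⟩,h5,h6⟩ := hp
    have e1 : |p.1 - a| = |a - p.1| := abs_sub_comm _ _
    have e2 : |p.2 - b| = |b - p.2| := abs_sub_comm _ _
    rw [e1, e2]
    refine ⟨⟨⟨by omega, by omega⟩, by omega, by omega⟩, h5, ?_⟩
    push_cast
    push_cast at h6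
    linear_combination h6
  · intro q hq; ext <;> simp
  · intro p hp; ext <;> simp
  · intro q hq
    have e1 : a - (q.1 + a) = -q.1 := by ring
    have e2 : b - (q.2 + b) = -q.2 := by ring
    rw [e1, e2, abs_neg, abs_neg]
end
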